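/- Let K, C > 0 and μ ∈ [0,1) with αμ < 1. Suppose d_max/d_min ≤ K, ‖Q − u₁u₁ᵀ‖₂ ≤ μ, and ‖v‖₂ ≤ C/√n. Then the total variation distance between PageRank and its degree-based approximation satisfies d_TV(π, π̄) = (1/2)‖π − π̄‖₁ ≤ (1/2)·(1−α)·C·√K·(αμ/(1−αμ)). -/

import Mathlib

/-!
Write `S = D^{1/2}`, so that `P = S Q S⁻¹`, and split `Q = N + R` with `N = u₁u₁ᵀ`. As `u₁` is a
unit eigenvector of the symmetric matrix `Q`, `N` is a projection with `NR = RN = 0`, hence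
`(1 - αQ)⁻¹ = W + α/(1-α) · N` with `W = (1 - αR)⁻¹ = 1 + αRW`. Conjugating by `S`, the `N`-part
becomes the degree term `α d / vol(G)` of `π̄` and the `1` in `W` its term `(1-α) v`, leaving
`π - π̄ = (1-α)α · S R W S⁻¹ v`. The Neumann series gives `‖W‖₂ ≤ 1/(1-αμ)`, the diagonal factors
contribute `√(d_max/d_min)`, and `‖x‖₁ ≤ √n ‖x‖₂` turns `‖v‖₂ ≤ C/√n` into the bound.
-/

open Matrix Finset

/-- Spectral norm of a matrix: the operator norm induced by the Euclidean vector norm. -/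
noncomputable def sNorm {n : ℕ} (M : Matrix (Fin n) (Fin n) ℝ) : ℝ :=
  ‖Matrix.toEuclideanCLM (𝕜 := ℝ) M‖

/-- Euclidean norm of a vector. -/
noncomputable def vNorm2 {n : ℕ} (x : Fin n → ℝ) : ℝ :=
  Real.sqrt (∑ i, (x i) ^ 2)

open scoped Matrix.Norms.L2Operator

theorem sNorm_eq_norm {n : ℕ} (M : Matrix (Fin n) (Fin n) ℝ) : sNorm M = ‖M‖ := rfl

theorem norm_ringInverse_one_sub_le {R : Type*} [NormedRing R] [NormOneClass R]
    [HasSummableGeomSeries R] {x : R} {r : ℝ} (hx : ‖x‖ ≤ r) (hr : r < 1) :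
    ‖Ring.inverse (1 - x)‖ ≤ (1 - r)⁻¹ := by
  have h := tsum_geometric_le_of_norm_lt_one x (hx.trans_lt hr)
  rw [geom_series_eq_inverse x (hx.trans_lt hr), norm_one, sub_self, zero_add] at h
  exact h.trans (inv_anti₀ (by linarith) (by linarith))

theorem one_sub_smul_add_mul_eq {𝕜 A : Type*} [Field 𝕜] [Ring A] [Algebra 𝕜 A]
    {N R W : A} (α : 𝕜) (hNN : N * N = N) (hNR : N * R = 0) (hRN : R * N = 0)
    (hW : (1 - α • R) * W = 1) :
    (1 - α • (N + R)) * ((1 - α) • 1 + α • N + ((1 - α) * α) • (R * W)) = (1 - α) • 1 := by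
  have hN : (1 - α • (N + R)) * N = (1 - α) • N := by
    rw [sub_mul, one_mul, smul_mul_assoc, add_mul, hNN, hRN, add_zero, sub_smul, one_smul]
  have hR : (1 - α • (N + R)) * (R * W) = R := by
    have : (1 - α • (N + R)) * (R * W) = R * ((1 - α • R) * W) - α • (N * R * W) := by
      simp only [smul_add, sub_mul, add_mul, mul_sub, one_mul, smul_mul_assoc,
        mul_smul_comm, mul_assoc]
      abel
    rw [this, hW, hNR, mul_one, zero_mul, smul_zero, sub_zero]
  rw [mul_add, mul_add, mul_smul_comm, mul_smul_comm, mul_smul_comm, mul_one, hN, hR]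
  module

theorem conj_one_sub_smul_add_mul_eq {𝕜 A : Type*} [Field 𝕜] [Ring A] [Algebra 𝕜 A]
    {S S' N R W : A} (α : 𝕜) (hSS' : S * S' = 1) (hS'S : S' * S = 1) (hNN : N * N = N)
    (hNR : N * R = 0) (hRN : R * N = 0) (hW : (1 - α • R) * W = 1) :
    (1 - α • (S * (N + R) * S')) *
        ((1 - α) • 1 + α • (S * N * S') + ((1 - α) * α) • (S * (R * W) * S')) = (1 - α) • 1 := by
  have hcancel : ∀ X : A, S' * (S * X) = X := fun X => by rw [← mul_assoc, hS'S, one_mul]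
  calc _ = S * ((1 - α • (N + R)) * ((1 - α) • 1 + α • N + ((1 - α) * α) • (R * W))) * S' := by
        simp only [mul_sub, sub_mul, mul_add, add_mul, mul_smul_comm, smul_mul_assoc, mul_one,
          one_mul, hcancel, hSS', mul_assoc]
    _ = (1 - α) • 1 := by
        rw [one_sub_smul_add_mul_eq α hNN hNR hRN hW, mul_smul_comm, mul_one, smul_mul_assoc, hSS']

section Projection
variable {ι K : Type*} [Fintype ι] [CommRing K] {Q : Matrix ι ι K} {u : ι → K}

theorem vecMulVec_self_mul_self (hu : u ⬝ᵥ u = 1) :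
    vecMulVec u u * vecMulVec u u = vecMulVec u u := by
  rw [vecMulVec_mul_vecMulVec, hu, one_smul]

theorem vecMulVec_self_mul_sub_eq_zero (hQ : Qᵀ = Q) (hQu : Q *ᵥ u = u) (hu : u ⬝ᵥ u = 1) :
    vecMulVec u u * (Q - vecMulVec u u) = 0 := by
  rw [mul_sub, vecMulVec_mul, ← mulVec_transpose, hQ, hQu, vecMulVec_self_mul_self hu, sub_self]

theorem sub_vecMulVec_self_mul_eq_zero (hQu : Q *ᵥ u = u) (hu : u ⬝ᵥ u = 1) :
    (Q - vecMulVec u u) * vecMulVec u u = 0 := by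
  rw [sub_mul, mul_vecMulVec, hQu, vecMulVec_self_mul_self hu, sub_self]

end Projection

theorem div_dotProduct_div_self {ι K : Type*} [Fintype ι] [Field K] {s d : ι → K} {t : K}
    (hs : ∀ i, s i * s i = d i) (ht : t * t = ∑ j, d j) (ht0 : t ≠ 0) :
    (fun i => s i / t) ⬝ᵥ (fun i => s i / t) = 1 := by
  simp only [dotProduct, div_mul_div_comm, hs, ← Finset.sum_div, ← ht,
    div_self (mul_ne_zero ht0 ht0)]

section Degree
variable {ι K : Type*} [Fintype ι] [DecidableEq ι] [Field K]
  {A Q W : Matrix ι ι K} {d s u v : ι → K} {t α : K}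

theorem diagonal_mul_diagonal_inv {w : ι → K} (hw : ∀ i, w i ≠ 0) :
    diagonal w * diagonal (fun i => (w i)⁻¹) = 1 := by
  rw [diagonal_mul_diagonal, ← diagonal_one]
  exact congrArg diagonal (funext fun i => mul_inv_cancel₀ (hw i))

theorem diagonal_inv_mul_diagonal {w : ι → K} (hw : ∀ i, w i ≠ 0) :
    diagonal (fun i => (w i)⁻¹) * diagonal w = 1 := by
  rw [diagonal_mul_diagonal, ← diagonal_one]
  exact congrArg diagonal (funext fun i => inv_mul_cancel₀ (hw i))

theorem symmetrized_mulVec_sqrt_degree (hd : ∀ i, d i = ∑ j, A i j) (hs : ∀ i, s i * s i = d i)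
    (hs0 : ∀ i, s i ≠ 0) :
    (diagonal (fun i => (s i)⁻¹) * A * diagonal (fun i => (s i)⁻¹)) *ᵥ s = s := by
  have hone : diagonal (fun i => (s i)⁻¹) *ᵥ s = 1 := by
    ext i; simp [mulVec_diagonal, inv_mul_cancel₀ (hs0 i)]
  have hdeg : A *ᵥ 1 = d := by
    ext i; simp [mulVec, dotProduct, hd]
  ext i
  rw [← mulVec_mulVec, hone, ← mulVec_mulVec, hdeg, mulVec_diagonal, ← hs,
    inv_mul_cancel_left₀ (hs0 i)]

theorem mul_diagonal_inv_eq_conj (hs : ∀ i, s i * s i = d i) (hs0 : ∀ i, s i ≠ 0) :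
    A * diagonal (fun i => (d i)⁻¹) = diagonal s *
      (diagonal (fun i => (s i)⁻¹) * A * diagonal (fun i => (s i)⁻¹)) *
        diagonal (fun i => (s i)⁻¹) := by
  simp only [← mul_assoc, diagonal_mul_diagonal_inv hs0, one_mul]
  rw [mul_assoc, diagonal_mul_diagonal]
  simp only [← hs, mul_inv]

theorem conj_vecMulVec_mulVec (hs : ∀ i, s i * s i = d i) (hs0 : ∀ i, s i ≠ 0)
    (ht : t * t = ∑ j, d j) (hv1 : ∑ i, v i = 1) :
    (diagonal s * vecMulVec (fun i => s i / t) (fun i => s i / t) *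
      diagonal (fun i => (s i)⁻¹)) *ᵥ v = fun i => d i / ∑ j, d j := by
  have hrow : (fun i => s i / t) ᵥ* diagonal (fun i => (s i)⁻¹) = fun _ => t⁻¹ := by
    ext j
    rw [vecMul_diagonal, div_mul_eq_mul_div, mul_inv_cancel₀ (hs0 j), one_div]
  have hdot : (fun _ => t⁻¹) ⬝ᵥ v = t⁻¹ := by
    rw [dotProduct, ← Finset.mul_sum, hv1, mul_one]
  rw [mul_vecMulVec, vecMulVec_mul, hrow, vecMulVec_mulVec, hdot]
  ext i
  rw [Pi.smul_apply, MulOpposite.smul_eq_mul_unop, MulOpposite.unop_op, mulVec_diagonal, ← ht, ← hs]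
  ring

theorem pageRank_sub_degree_approx_eq (hA : A.IsSymm) (hd : ∀ i, d i = ∑ j, A i j)
    (hs : ∀ i, s i * s i = d i) (hs0 : ∀ i, s i ≠ 0)
    (hQ : Q = diagonal (fun i => (s i)⁻¹) * A * diagonal (fun i => (s i)⁻¹))
    (ht : t * t = ∑ j, d j) (ht0 : t ≠ 0) (hu : u = fun i => s i / t) (hα : α ≠ 1)
    (hv1 : ∑ i, v i = 1) (hW : (1 - α • (Q - vecMulVec u u)) * W = 1) :
    (1 - α) • ((1 - α • (A * diagonal fun i => (d i)⁻¹))⁻¹ *ᵥ v) -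
        (fun i => α * d i / ∑ j, d j + (1 - α) * v i) =
      ((1 - α) * α) • ((diagonal s * ((Q - vecMulVec u u) * W) * diagonal fun i => (s i)⁻¹) *ᵥ v) := by
  have hQu : Q *ᵥ u = u := by
    rw [hu, show (fun i => s i / t) = t⁻¹ • s from funext fun i => div_eq_inv_mul _ _, mulVec_smul,
      hQ, symmetrized_mulVec_sqrt_degree hd hs hs0]
  have huu : u ⬝ᵥ u = 1 := hu ▸ div_dotProduct_div_self hs ht ht0
  have hQsymm : Qᵀ = Q := by
    rw [hQ, transpose_mul, transpose_mul, diagonal_transpose, hA.eq, mul_assoc]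
  have h1α : 1 - α ≠ 0 := sub_ne_zero.2 (Ne.symm hα)
  have hinv : (1 - α • (A * diagonal fun i => (d i)⁻¹))⁻¹ = (1 - α)⁻¹ •
      ((1 - α) • 1 + α • (diagonal s * vecMulVec u u * diagonal fun i => (s i)⁻¹) +
        ((1 - α) * α) • (diagonal s * ((Q - vecMulVec u u) * W) * diagonal fun i => (s i)⁻¹)) := by
    have hP : A * diagonal (fun i => (d i)⁻¹) =
        diagonal s * (vecMulVec u u + (Q - vecMulVec u u)) * diagonal fun i => (s i)⁻¹ := by
      rw [add_sub_cancel, hQ, mul_diagonal_inv_eq_conj hs hs0]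
    refine inv_eq_right_inv ?_
    rw [hP, mul_smul_comm,
      conj_one_sub_smul_add_mul_eq α (diagonal_mul_diagonal_inv hs0) (diagonal_inv_mul_diagonal hs0)
        (vecMulVec_self_mul_self huu) (vecMulVec_self_mul_sub_eq_zero hQsymm hQu huu)
        (sub_vecMulVec_self_mul_eq_zero hQu huu) hW, smul_smul, inv_mul_cancel₀ h1α, one_smul]
  rw [hinv, smul_mulVec, smul_smul, mul_inv_cancel₀ h1α, one_smul, add_mulVec, add_mulVec,
    smul_mulVec, smul_mulVec, smul_mulVec, one_mulVec, hu,
    conj_vecMulVec_mulVec hs hs0 ht hv1]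
  ext i
  simp only [Pi.sub_apply, Pi.add_apply, Pi.smul_apply, smul_eq_mul]
  ring

end Degree

section Norms
variable {ι : Type*} [Fintype ι] [DecidableEq ι]

theorem norm_diagonal_le {w : ι → ℝ} {c : ℝ} (hc : 0 ≤ c) (h : ∀ i, |w i| ≤ c) :
    ‖diagonal w‖ ≤ c := by
  rw [l2_opNorm_diagonal]
  exact (pi_norm_le_iff_of_nonneg hc).2 h

theorem norm_diagonal_mul_mul_diagonal_inv_le [Nonempty ι] {s : ι → ℝ} {a b : ℝ} (hb : 0 < b)
    (hsa : ∀ i, s i ≤ a) (hbs : ∀ i, b ≤ s i) (X : Matrix ι ι ℝ) :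
    ‖diagonal s * X * diagonal (fun i => (s i)⁻¹)‖ ≤ a / b * ‖X‖ := by
  have hs : ∀ i, 0 < s i := fun i => hb.trans_le (hbs i)
  have hS : ‖diagonal s‖ ≤ a :=
    norm_diagonal_le ((hs (Classical.arbitrary ι)).le.trans (hsa _)) fun i =>
      (abs_of_pos (hs i)).trans_le (hsa i)
  have hS' : ‖diagonal (fun i => (s i)⁻¹)‖ ≤ b⁻¹ :=
    norm_diagonal_le (inv_nonneg.2 hb.le) fun i =>
      (abs_of_pos (inv_pos.2 (hs i))).trans_le (inv_anti₀ hb (hbs i))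
  calc _ ≤ ‖diagonal s‖ * ‖X‖ * ‖diagonal (fun i => (s i)⁻¹)‖ :=
        (norm_mul_le _ _).trans (mul_le_mul_of_nonneg_right (norm_mul_le _ _) (norm_nonneg _))
    _ ≤ a * ‖X‖ * b⁻¹ := by
        gcongr
        exact mul_nonneg ((norm_nonneg _).trans hS) (norm_nonneg X)
    _ = a / b * ‖X‖ := by ring

theorem norm_diagonal_sqrt_mul_mul_diagonal_inv_sqrt_le [Nonempty ι] {d : ι → ℝ}
    (hd : ∀ i, 0 < d i) (X : Matrix ι ι ℝ) :
    ‖diagonal (fun i => √(d i)) * X * diagonal (fun i => (√(d i))⁻¹)‖ ≤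
      √(univ.sup' univ_nonempty d / univ.inf' univ_nonempty d) * ‖X‖ := by
  have hmin : 0 < univ.inf' univ_nonempty d := (lt_inf'_iff _).2 fun i _ => hd i
  rw [Real.sqrt_div' _ hmin.le]
  exact norm_diagonal_mul_mul_diagonal_inv_le (Real.sqrt_pos.2 hmin)
    (fun i => Real.sqrt_le_sqrt (le_sup' d (mem_univ i)))
    (fun i => Real.sqrt_le_sqrt (inf'_le d (mem_univ i))) X

end Norms

section EuclideanNorms
variable {n : ℕ}

theorem vNorm2_eq_norm (x : Fin n → ℝ) : vNorm2 x = ‖WithLp.toLp 2 x‖ := by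
  simp [vNorm2, EuclideanSpace.norm_eq]

theorem sum_abs_le_sqrt_card_mul_vNorm2 (x : Fin n → ℝ) : ∑ i, |x i| ≤ √n * vNorm2 x := by
  rw [vNorm2, ← Real.sqrt_mul (Nat.cast_nonneg n), Real.le_sqrt (by positivity) (by positivity)]
  simpa [sq_abs] using sq_sum_le_card_mul_sum_sq (s := univ) (f := fun i => |x i|)

theorem sum_abs_mulVec_le (M : Matrix (Fin n) (Fin n) ℝ) (x : Fin n → ℝ) :
    ∑ i, |(M *ᵥ x) i| ≤ √n * (‖M‖ * vNorm2 x) := by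
  refine (sum_abs_le_sqrt_card_mul_vNorm2 _).trans (mul_le_mul_of_nonneg_left ?_ (by positivity))
  simpa [vNorm2_eq_norm] using M.l2_opNorm_mulVec (WithLp.toLp 2 x)

end EuclideanNorms

theorem pagerank_tv_error_bound_general
    (n : ℕ) [NeZero n]
    (A : Matrix (Fin n) (Fin n) ℝ) (hAsymm : A.IsSymm)
    (d : Fin n → ℝ) (hd : ∀ i, d i = ∑ j, A i j) (hdpos : ∀ i, 0 < d i)
    (α : ℝ) (hα : α ∈ Set.Ioo (0 : ℝ) 1)
    (v : Fin n → ℝ) (hv1 : ∑ i, v i = 1)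
    (K C : ℝ)
    (μ : ℝ) (hαμ : α * μ < 1)
    (hdeg : univ.sup' univ_nonempty d / univ.inf' univ_nonempty d ≤ K)
    (P : Matrix (Fin n) (Fin n) ℝ)
    (hP : P = A * Matrix.diagonal (fun i => (d i)⁻¹))
    (Q : Matrix (Fin n) (Fin n) ℝ)
    (hQ : Q = Matrix.diagonal (fun i => (Real.sqrt (d i))⁻¹) * A *
      Matrix.diagonal (fun i => (Real.sqrt (d i))⁻¹))
    (u₁ : Fin n → ℝ)
    (hu₁ : u₁ = fun i => Real.sqrt (d i) / Real.sqrt (∑ j, d j))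
    (hgap : sNorm (Q - Matrix.vecMulVec u₁ u₁) ≤ μ)
    (hv2 : vNorm2 v ≤ C / Real.sqrt n)
    (π : Fin n → ℝ) (hπ : π = (1 - α) • ((1 - α • P)⁻¹ *ᵥ v))
    (πbar : Fin n → ℝ)
    (hπbar : πbar = fun i => α * d i / (∑ j, d j) + (1 - α) * v i) :
    (1 / 2) * ∑ i, |π i - πbar i| ≤
      (1 / 2) * (1 - α) * C * Real.sqrt K * (α * μ / (1 - α * μ)) := by
  obtain ⟨hα0, hα1⟩ := hα
  set R := Q - vecMulVec u₁ u₁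
  rw [sNorm_eq_norm] at hgap
  have hαR : ‖α • R‖ ≤ α * μ := by
    rw [norm_smul, Real.norm_of_nonneg hα0.le]
    exact mul_le_mul_of_nonneg_left hgap hα0.le
  set W := Ring.inverse (1 - α • R)
  have hW := Ring.mul_inverse_cancel _ (isUnit_one_sub_of_norm_lt_one (hαR.trans_lt hαμ))
  have herr := pageRank_sub_degree_approx_eq hAsymm hd (fun i => Real.mul_self_sqrt (hdpos i).le)
    (fun i => (Real.sqrt_pos.2 (hdpos i)).ne') hQ
    (Real.mul_self_sqrt (sum_nonneg fun i _ => (hdpos i).le))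
    (Real.sqrt_pos.2 (sum_pos (fun i _ => hdpos i) univ_nonempty)).ne' hu₁ hα1.ne hv1 hW
  rw [← hP, ← hπ, ← hπbar, ← smul_mulVec] at herr
  set M := ((1 - α) * α) • (diagonal (fun i => √(d i)) * (R * W) * diagonal fun i => (√(d i))⁻¹)
  have hM : ‖M‖ ≤ (1 - α) * α * (√K * (μ * (1 - α * μ)⁻¹)) := by
    have hRW : ‖R * W‖ ≤ μ * (1 - α * μ)⁻¹ := (norm_mul_le _ _).trans <| mul_le_mul hgap
      (norm_ringInverse_one_sub_le hαR hαμ) (norm_nonneg _) ((norm_nonneg _).trans hgap)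
    rw [norm_smul, Real.norm_of_nonneg (mul_pos (sub_pos.2 hα1) hα0).le]
    gcongr
    exact (norm_diagonal_sqrt_mul_mul_diagonal_inv_sqrt_le hdpos _).trans
      (mul_le_mul (Real.sqrt_le_sqrt hdeg) hRW (norm_nonneg _) (Real.sqrt_nonneg _))
  calc (1 / 2) * ∑ i, |π i - πbar i| = (1 / 2) * ∑ i, |(M *ᵥ v) i| := by
        simp only [← herr, Pi.sub_apply]
    _ ≤ (1 / 2) * (√n * (‖M‖ * vNorm2 v)) := by
        gcongr
        exact sum_abs_mulVec_le M v
    _ ≤ (1 / 2) * (√n * ((1 - α) * α * (√K * (μ * (1 - α * μ)⁻¹)) * (C / √n))) := by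
        gcongr _ * (_ * ?_)
        exact mul_le_mul hM hv2 (Real.sqrt_nonneg _) ((norm_nonneg _).trans hM)
    _ = _ := by
        have hn : √(n : ℝ) ≠ 0 := by simp [NeZero.ne n]
        field_simp

/-- if `d_max/d_min ≤ K`, `‖Q − u₁u₁ᵀ‖₂ ≤ μ` and `‖v‖₂ ≤ C/√n` then
`d_TV(π, π̄) = (1/2)‖π − π̄‖₁ ≤ (1/2)·(1−α)·C·√K·(αμ/(1−αμ))`. -/
theorem pagerank_tv_error_bound
    (n : ℕ) [NeZero n]
    (A : Matrix (Fin n) (Fin n) ℝ) (hAsymm : A.IsSymm) (hA0 : ∀ i j, 0 ≤ A i j)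
    (d : Fin n → ℝ) (hd : ∀ i, d i = ∑ j, A i j) (hdpos : ∀ i, 0 < d i)
    (α : ℝ) (hα : α ∈ Set.Ioo (0 : ℝ) 1)
    (v : Fin n → ℝ) (hv0 : ∀ i, 0 ≤ v i) (hv1 : ∑ i, v i = 1)
    (K C : ℝ) (hK : 0 < K) (hC : 0 < C)
    (μ : ℝ) (hμ : μ ∈ Set.Ico (0 : ℝ) 1) (hαμ : α * μ < 1)
    (hdeg : univ.sup' univ_nonempty d / univ.inf' univ_nonempty d ≤ K)
    (P : Matrix (Fin n) (Fin n) ℝ)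
    (hP : P = A * Matrix.diagonal (fun i => (d i)⁻¹))
    (Q : Matrix (Fin n) (Fin n) ℝ)
    (hQ : Q = Matrix.diagonal (fun i => (Real.sqrt (d i))⁻¹) * A *
      Matrix.diagonal (fun i => (Real.sqrt (d i))⁻¹))
    (u₁ : Fin n → ℝ)
    (hu₁ : u₁ = fun i => Real.sqrt (d i) / Real.sqrt (∑ j, d j))
    (hgap : sNorm (Q - Matrix.vecMulVec u₁ u₁) ≤ μ)
    (hv2 : vNorm2 v ≤ C / Real.sqrt n)
    (π : Fin n → ℝ) (hπ : π = (1 - α) • ((1 - α • P)⁻¹ *ᵥ v))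
    (πbar : Fin n → ℝ)
    (hπbar : πbar = fun i => α * d i / (∑ j, d j) + (1 - α) * v i) :
    (1 / 2) * ∑ i, |π i - πbar i| ≤
      (1 / 2) * (1 - α) * C * Real.sqrt K * (α * μ / (1 - α * μ)) :=
  pagerank_tv_error_bound_general n A hAsymm d hd hdpos α hα v hv1 K C μ hαμ hdeg P hP Q hQ u₁ hu₁
    hgap hv2 π hπ πbar hπbar
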